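/- Let X and Y be types, let Z = {CP, NC}, and let S = ((x_1,y_1,z_1),…,(x_m,y_m,z_m)) be a sample of size m ≥ 1 in X × Y × Z. Let O be a set of hypotheses X → Y and let C be a set of hypotheses X → Z containing the symmetric difference class O∆O = { x ↦ (NC if o(x) ≠ o'(x) else CP) : o, o' ∈ O }. If ĉ ∈ C minimizes the empirical cooperation-identification error ĉer_S over C (i.e., ĉer_S(ĉ) ≤ ĉer_S(c) for all c ∈ C), then for every o, o' ∈ O: ĉer_S(ĉ) ≤ p̂_S + ôer_S(o) − Δ_S(o'). (This is the empirical, sample-level core of Theorem 1 of the paper.) -/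

import Mathlib

open scoped Classical

/-- Cooperation labels: `CP` (cooperative) and `NC` (non-cooperative). -/
inductive Coop : Type
  | CP : Coop
  | NC : Coop
deriving DecidableEq

/-- Empirical object-identification error of `o` on the sample `s`. -/
noncomputable def oer {X Y : Type*} {m : ℕ} (o : X → Y) (s : Fin m → X × Y × Coop) : ℝ :=
  ((Finset.univ.filter fun i => o (s i).1 ≠ (s i).2.1).card : ℝ) / m

/-- Empirical cooperation-identification error of `c` on the sample `s`. -/
noncomputable def cer {X Y : Type*} {m : ℕ} (c : X → Coop) (s : Fin m → X × Y × Coop) : ℝ :=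
  ((Finset.univ.filter fun i => c (s i).1 ≠ (s i).2.2).card : ℝ) / m

/-- Empirical non-cooperation frequency of the sample `s`. -/
noncomputable def pNC {X Y : Type*} {m : ℕ} (s : Fin m → X × Y × Coop) : ℝ :=
  ((Finset.univ.filter fun i => (s i).2.2 = Coop.NC).card : ℝ) / m

/-- Cooperation gap of `o` on the sample `s`:
`(1/m)·#{i : z_i = NC ∧ o(x_i) ≠ y_i} − (1/m)·#{i : z_i = CP ∧ o(x_i) ≠ y_i}`. -/
noncomputable def gap {X Y : Type*} {m : ℕ} (o : X → Y) (s : Fin m → X × Y × Coop) : ℝ :=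
  ((Finset.univ.filter fun i => (s i).2.2 = Coop.NC ∧ o (s i).1 ≠ (s i).2.1).card : ℝ) / m
    - ((Finset.univ.filter fun i => (s i).2.2 = Coop.CP ∧ o (s i).1 ≠ (s i).2.1).card : ℝ) / m

/-!
The disagreement classifier `x ↦ [o x ≠ o' x]` lies in `C`, so it suffices to bound its error.
Pointwise: on a cooperative point, misclassifying means `o x ≠ o' x`, so `o` or `o'` errs
(triangle inequality); on a non-cooperative point where `o'` errs, misclassifying means
`o x = o' x`, so `o` errs too. Summing these indicator inequalities over the sample gives the bound.
-/

open Finset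

noncomputable def disagreement {X Y : Type*} (o o' : X → Y) : X → Coop :=
  fun x => if o x ≠ o' x then Coop.NC else Coop.CP

theorem disagreement_ne_indicator_add_le {X Y : Type*} (o o' : X → Y) (x : X) (y : Y)
    (z : Coop) :
    (if disagreement o o' x ≠ z then 1 else 0) + (if z = Coop.NC ∧ o' x ≠ y then 1 else 0)
      ≤ (if z = Coop.NC then 1 else 0) + (if o x ≠ y then 1 else 0)
        + (if z = Coop.CP ∧ o' x ≠ y then 1 else 0) := by
  unfold disagreement
  cases z <;> grind

theorem card_disagreement_ne_add_le {X Y : Type*} {m : ℕ} (o o' : X → Y)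
    (s : Fin m → X × Y × Coop) :
    #{i | disagreement o o' (s i).1 ≠ (s i).2.2}
        + #{i | (s i).2.2 = Coop.NC ∧ o' (s i).1 ≠ (s i).2.1}
      ≤ #{i | (s i).2.2 = Coop.NC} + #{i | o (s i).1 ≠ (s i).2.1}
        + #{i | (s i).2.2 = Coop.CP ∧ o' (s i).1 ≠ (s i).2.1} := by
  simp only [card_filter, ← sum_add_distrib]
  exact sum_le_sum fun i _ => disagreement_ne_indicator_add_le o o' _ _ _

theorem cer_disagreement_le {X Y : Type*} {m : ℕ} (o o' : X → Y)
    (s : Fin m → X × Y × Coop) :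
    cer (disagreement o o') s ≤ pNC s + oer o s - gap o' s := by
  have hcount := (Nat.cast_le (α := ℝ)).2 (card_disagreement_ne_add_le o o' s)
  unfold cer pNC oer gap
  rw [div_sub_div_same, ← add_div, div_sub_div_same]
  refine div_le_div_of_nonneg_right ?_ m.cast_nonneg
  push_cast at hcount
  linarith

theorem cer_min_le_general {X Y : Type*} {m : ℕ}
    (s : Fin m → X × Y × Coop)
    (O : Set (X → Y)) (C : Set (X → Coop))
    (hOC : ∀ o ∈ O, ∀ o' ∈ O,
      (fun x => if o x ≠ o' x then Coop.NC else Coop.CP) ∈ C)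
    (chat : X → Coop)
    (hmin : ∀ c ∈ C, cer chat s ≤ cer c s) :
    ∀ o ∈ O, ∀ o' ∈ O, cer chat s ≤ pNC s + oer o s - gap o' s :=
  fun o ho o' ho' => (hmin _ (hOC o ho o' ho')).trans (cer_disagreement_le o o' s)

/-- Empirical core of Theorem 1: if `C` contains the symmetric-difference class `O∆O`
and `ĉ` minimizes the empirical cooperation-identification error over `C`, then for
every `o, o' ∈ O`: `ĉer_S(ĉ) ≤ p̂_S + ôer_S(o) − Δ_S(o')`. -/
theorem cer_min_le {X Y : Type*} {m : ℕ} (hm : 1 ≤ m)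
    (s : Fin m → X × Y × Coop)
    (O : Set (X → Y)) (C : Set (X → Coop))
    (hOC : ∀ o ∈ O, ∀ o' ∈ O,
      (fun x => if o x ≠ o' x then Coop.NC else Coop.CP) ∈ C)
    (chat : X → Coop) (hchat : chat ∈ C)
    (hmin : ∀ c ∈ C, cer chat s ≤ cer c s) :
    ∀ o ∈ O, ∀ o' ∈ O, cer chat s ≤ pNC s + oer o s - gap o' s :=
  cer_min_le_general s O C hOC chat hmin
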